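/- arXiv:1902.01219 — 4 statements merged into one kernel-verified Lean document; each statement's English description precedes it below -/
import Mathlib

section
/- For Z ~ Poisson(λ) and r ∈ {2/3, 4/3}, the expectation of (max(Z,1))^{−r} satisfies (1/2)·(1/max(e²λ,1))^r ≤ E[(Z ∨ 1)^{−r}] ≤ 6·(e²/max(λ,1))^r. -/
/-!
Both bounds come from integrating a pointwise inequality against `Po(λ)`, using only
`E[1] = 1`, `E[Z] = λ` and `E[1/((Z+1)(Z+2))] ≤ 1/max(λ,1)²`; the last holds because
`λ² Po(λ){n} / ((n+1)(n+2)) = Po(λ){n+2}`.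

Lower bound: `1 - n/M` is a linear minorant of the indicator of `n ≤ M`, so
`E[(Z ∨ 1)^{-r}] ≥ M^{-r} (1 - λ/M)`, and `M = max(e²λ, 1)` makes `1 - λ/M ≥ 1/2`.

Upper bound: with `L = max(λ, 1)` and `m = n ∨ 1`, concavity of `t ↦ t^{r/2}` gives
`(L/m)^r ≤ (r/2)(L/m)² + 1 - r/2`, and `(n+1)(n+2) ≤ 6 (n ∨ 1)²` turns `(L/m)²` into a multiple
of `L²/((n+1)(n+2))`.
-/

open Real MeasureTheory ProbabilityTheory Nat
open scoped NNReal

namespace Real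

lemma rpow_le_half_mul_sq_add {x r : ℝ} (hx : 0 ≤ x) (hr₀ : 0 ≤ r) (hr₂ : r ≤ 2) :
    x ^ r ≤ r / 2 * x ^ 2 + (1 - r / 2) := by
  have h := rpow_one_add_le_one_add_mul_self (s := x ^ 2 - 1) (by nlinarith)
    (by linarith : 0 ≤ r / 2) (by linarith)
  have hsq : (x ^ 2) ^ (r / 2) = x ^ r := by
    rw [← rpow_natCast, ← rpow_mul hx]
    norm_num [mul_div_cancel₀]
  rw [add_sub_cancel, hsq] at h
  linear_combination h

lemma rpow_neg_mul_one_sub_div_le {M r : ℝ} (hM : 1 ≤ M) (hr : 0 ≤ r) (n : ℕ) :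
    M ^ (-r) * (1 - n / M) ≤ ((max n 1 : ℕ) : ℝ) ^ (-r) := by
  have hM₀ : 0 < M := by linarith
  by_cases hn : (n : ℝ) ≤ M
  · have hmax : ((max n 1 : ℕ) : ℝ) ≤ M := by push_cast; exact max_le hn hM
    have : 0 ≤ n / M := by positivity
    calc M ^ (-r) * (1 - n / M) ≤ M ^ (-r) := mul_le_of_le_one_right (by positivity) (by linarith)
      _ ≤ ((max n 1 : ℕ) : ℝ) ^ (-r) :=
          rpow_le_rpow_of_nonpos (by positivity) hmax (neg_nonpos.2 hr)
  · have : 1 - n / M < 0 := by rw [sub_neg, one_lt_div hM₀]; linarith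
    exact (mul_nonpos_of_nonneg_of_nonpos (by positivity) this.le).trans (by positivity)

end Real

lemma Nat.add_one_mul_add_two_le_six_mul_max_one_sq (n : ℕ) :
    (n + 1) * (n + 2) ≤ 6 * max n 1 ^ 2 := by
  rcases Nat.eq_zero_or_pos n with rfl | hn
  · norm_num
  · rw [max_eq_left hn]
    nlinarith

namespace ProbabilityTheory

variable (lam : ℝ≥0)

lemma poisson_pmf_succ_mul_succ (n : ℕ) :
    exp (-lam) * lam ^ (n + 1) / (n + 1)! * (n + 1) = lam * (exp (-lam) * lam ^ n / n !) := by
  rw [factorial_succ]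
  push_cast
  field_simp
  ring

lemma hasSum_poisson_pmf_mul_natCast :
    HasSum (fun n : ℕ ↦ exp (-lam) * lam ^ n / n ! * n) lam := by
  rw [← hasSum_nat_add_iff' 1]
  simpa [poisson_pmf_succ_mul_succ] using (hasSum_one_poissonMeasure lam).mul_left (lam : ℝ)

lemma integrable_natCast_poissonMeasure : Integrable (fun n : ℕ ↦ (n : ℝ)) Po(lam) :=
  integrable_poissonMeasure_iff.2 (by simpa using (hasSum_poisson_pmf_mul_natCast lam).summable)

lemma integral_natCast_poissonMeasure : ∫ n, (n : ℝ) ∂Po(lam) = lam := by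
  simpa [integral_poissonMeasure] using (hasSum_poisson_pmf_mul_natCast lam).tsum_eq

lemma integrable_inv_add_one_mul_add_two_poissonMeasure :
    Integrable (fun n : ℕ ↦ (((n : ℝ) + 1) * (n + 2))⁻¹) Po(lam) :=
  .of_bound .of_discrete 1 <| ae_of_all _ fun n ↦ by
    rw [norm_of_nonneg (by positivity)]
    exact inv_le_one_of_one_le₀ (by nlinarith)

lemma integral_inv_add_one_mul_add_two_poissonMeasure_le :
    ∫ n, (((n : ℝ) + 1) * (n + 2))⁻¹ ∂Po(lam) ≤ (max (lam : ℝ) 1 ^ 2)⁻¹ := by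
  set E := ∫ n, (((n : ℝ) + 1) * (n + 2))⁻¹ ∂Po(lam) with hE
  have hE_le_one : E ≤ 1 := by
    calc E ≤ ∫ _, (1 : ℝ) ∂Po(lam) :=
          integral_mono (integrable_inv_add_one_mul_add_two_poissonMeasure lam)
            (integrable_const 1) fun n ↦ inv_le_one_of_one_le₀ (by nlinarith)
      _ = 1 := by simp
  have hsq_mul_E_le_one : lam ^ 2 * E ≤ 1 := by
    have htail := (hasSum_nat_add_iff' 2).2 (hasSum_one_poissonMeasure lam)
    have hterm : ∀ n : ℕ, lam ^ 2 * ((exp (-lam) * lam ^ n / n !) • (((n : ℝ) + 1) * (n + 2))⁻¹) =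
        exp (-lam) * lam ^ (n + 2) / (n + 2)! := fun n ↦ by
      rw [smul_eq_mul, factorial_succ, factorial_succ]
      push_cast
      field_simp
      ring
    rw [hE, integral_poissonMeasure, ← tsum_mul_left, tsum_congr hterm, htail.tsum_eq,
      sub_le_self_iff]
    exact Finset.sum_nonneg fun n _ ↦ by positivity
  rcases le_total (lam : ℝ) 1 with h | h
  · simpa [max_eq_right h] using hE_le_one
  · rw [max_eq_left h, inv_eq_one_div, le_div_iff₀' (by positivity)]
    exact hsq_mul_E_le_one

lemma integrable_max_one_rpow_neg_poissonMeasure {r : ℝ} (hr : 0 ≤ r) :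
    Integrable (fun n : ℕ ↦ ((max n 1 : ℕ) : ℝ) ^ (-r)) Po(lam) :=
  .of_bound .of_discrete 1 <| ae_of_all _ fun n ↦ by
    rw [norm_of_nonneg (by positivity)]
    exact rpow_le_one_of_one_le_of_nonpos (by exact_mod_cast le_max_right n 1) (by linarith)

lemma rpow_neg_mul_one_sub_div_le_integral_poissonMeasure {M r : ℝ} (hM : 1 ≤ M) (hr : 0 ≤ r) :
    M ^ (-r) * (1 - lam / M) ≤ ∫ n, ((max n 1 : ℕ) : ℝ) ^ (-r) ∂Po(lam) := by
  have hZ := integrable_natCast_poissonMeasure lam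
  calc M ^ (-r) * (1 - lam / M) = ∫ n : ℕ, M ^ (-r) * (1 - n / M) ∂Po(lam) := by
        rw [integral_const_mul, integral_sub (integrable_const 1) (hZ.div_const M), integral_div,
          integral_natCast_poissonMeasure]
        simp
    _ ≤ _ := integral_mono ((integrable_const 1).sub (hZ.div_const M) |>.const_mul _)
        (integrable_max_one_rpow_neg_poissonMeasure lam hr) (rpow_neg_mul_one_sub_div_le hM hr)

lemma integral_max_one_rpow_neg_poissonMeasure_le {r : ℝ} (hr₀ : 0 ≤ r) (hr₂ : r ≤ 2) :
    ∫ n, ((max n 1 : ℕ) : ℝ) ^ (-r) ∂Po(lam) ≤ 6 * max (lam : ℝ) 1 ^ (-r) := by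
  set L := max (lam : ℝ) 1
  have hL : 0 < L := lt_max_of_lt_right one_pos
  set g : ℕ → ℝ := fun n ↦ (((n : ℝ) + 1) * (n + 2))⁻¹
  have hg := integrable_inv_add_one_mul_add_two_poissonMeasure lam
  have hpt : ∀ n : ℕ,
      ((max n 1 : ℕ) : ℝ) ^ (-r) ≤ L ^ (-r) * (r / 2 * (6 * L ^ 2 * g n) + (1 - r / 2)) := by
    intro n
    have h6 : ((n : ℝ) + 1) * (n + 2) ≤ 6 * ((max n 1 : ℕ) : ℝ) ^ 2 := by
      exact_mod_cast add_one_mul_add_two_le_six_mul_max_one_sq n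
    set m : ℝ := ((max n 1 : ℕ) : ℝ)
    have hm : 0 < m := by positivity
    calc m ^ (-r) = L ^ (-r) * (L / m) ^ r := by
          rw [div_rpow hL.le hm.le, rpow_neg hL.le, rpow_neg hm.le]
          field_simp
      _ ≤ L ^ (-r) * (r / 2 * (L / m) ^ 2 + (1 - r / 2)) := by
          gcongr
          exact rpow_le_half_mul_sq_add (by positivity) hr₀ hr₂
      _ ≤ L ^ (-r) * (r / 2 * (6 * L ^ 2 * g n) + (1 - r / 2)) := by
          gcongr
          rw [div_pow, ← div_eq_mul_inv, div_le_div_iff₀ (by positivity) (by positivity)]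
          nlinarith [mul_le_mul_of_nonneg_left h6 (sq_nonneg L)]
  have hbound : Integrable (fun n ↦ L ^ (-r) * (r / 2 * (6 * L ^ 2 * g n) + (1 - r / 2))) Po(lam) :=
    (((hg.const_mul (6 * L ^ 2)).const_mul (r / 2)).add (integrable_const _)).const_mul _
  calc ∫ n, ((max n 1 : ℕ) : ℝ) ^ (-r) ∂Po(lam)
      ≤ ∫ n, L ^ (-r) * (r / 2 * (6 * L ^ 2 * g n) + (1 - r / 2)) ∂Po(lam) :=
        integral_mono (integrable_max_one_rpow_neg_poissonMeasure lam hr₀) hbound hpt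
    _ = L ^ (-r) * (r / 2 * (6 * L ^ 2 * ∫ n, g n ∂Po(lam)) + (1 - r / 2)) := by
        rw [integral_const_mul, integral_add ((hg.const_mul _).const_mul _) (integrable_const _),
          integral_const_mul, integral_const_mul, integral_const, probReal_univ, one_smul]
    _ ≤ L ^ (-r) * (r / 2 * (6 * L ^ 2 * (L ^ 2)⁻¹) + (1 - r / 2)) := by
        gcongr
        exact integral_inv_add_one_mul_add_two_poissonMeasure_le lam
    _ ≤ 6 * L ^ (-r) := by
        rw [mul_inv_cancel_right₀ (by positivity)]
        nlinarith [rpow_nonneg hL.le (-r)]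

end ProbabilityTheory

/-- For `Z ~ Poisson(λ)` and `r ∈ {2/3, 4/3}`,
`(1/2) * (1 / max (e² λ) 1)^r ≤ E[(Z ∨ 1)^(-r)] ≤ 6 * (e² / max λ 1)^r`. -/
theorem poisson_inv_moment_bounds
    (lam : ℝ) (hlam : 0 ≤ lam) (r : ℝ) (hr : r = 2 / 3 ∨ r = 4 / 3) :
    (1 / 2) * (1 / max (Real.exp 2 * lam) 1) ^ r
        ≤ (∑' n : ℕ, (Real.exp (-lam) * lam ^ n / n.factorial) * ((max n 1 : ℕ) : ℝ) ^ (-r)) ∧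
      (∑' n : ℕ, (Real.exp (-lam) * lam ^ n / n.factorial) * ((max n 1 : ℕ) : ℝ) ^ (-r))
        ≤ 6 * (Real.exp 2 / max lam 1) ^ r := by
  have hr₀ : 0 ≤ r := by rcases hr with rfl | rfl <;> norm_num
  have hr₂ : r ≤ 2 := by rcases hr with rfl | rfl <;> norm_num
  have he : 2 ≤ exp 2 := by linarith [add_one_le_exp (2 : ℝ)]
  lift lam to ℝ≥0 using hlam
  have hE : ∑' n : ℕ, (exp (-lam) * lam ^ n / n !) * ((max n 1 : ℕ) : ℝ) ^ (-r) =
      ∫ n, ((max n 1 : ℕ) : ℝ) ^ (-r) ∂Po(lam) := by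
    simp only [integral_poissonMeasure, smul_eq_mul]
  rw [hE]
  constructor
  · set M := max (exp 2 * lam) 1
    have hM : 1 ≤ M := le_max_right _ _
    have hlam_div : lam / M ≤ 1 / 2 := by
      rw [div_le_iff₀ (by positivity)]
      nlinarith [le_max_left (exp 2 * lam) 1, lam.2]
    calc 1 / 2 * (1 / M) ^ r ≤ M ^ (-r) * (1 - lam / M) := by
          rw [one_div M, inv_rpow (by positivity), ← rpow_neg (by positivity), mul_comm]
          exact mul_le_mul_of_nonneg_left (by linarith) (by positivity)
      _ ≤ _ := rpow_neg_mul_one_sub_div_le_integral_poissonMeasure lam hM hr₀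
  · refine (integral_max_one_rpow_neg_poissonMeasure_le lam hr₀ hr₂).trans ?_
    have hL : 0 < max (lam : ℝ) 1 := lt_max_of_lt_right one_pos
    rw [div_rpow (by positivity) hL.le, rpow_neg hL.le, div_eq_mul_inv]
    gcongr
    exact le_mul_of_one_le_left (by positivity) (one_le_rpow (by linarith) hr₀)
end

section
/- Let Z ~ Poisson(λ). If λ ≥ 1, then e^{−2/3}·λ^{2/3}/2 ≤ E[Z^{2/3}] ≤ λ^{2/3}; and if λ ≤ 1, then λ·e^{−λ} ≤ E[Z^{2/3}] ≤ λ. -/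
/-!
Write `n = y ^ 3`, so that `n ^ (2/3) = y ^ 2`. For `s ≥ 0` the polynomial inequalities
`3 s y² ≤ 2 y³ + s³` and `4 s³ y³ ≤ 3 s⁴ y² + y⁶` (weighted AM-GM) bound `n ^ (2/3)`
above and below by combinations of `1`, `n` and `n²`, whose Poisson expectations are `1`, `λ` and
`λ² + λ`. With `s = λ ^ (1/3)` this gives `E[Z^(2/3)] ≤ λ^(2/3)` for `λ > 0` and
`E[Z^(2/3)] ≥ (2/3) λ^(2/3)` for `λ ≥ 1`. For small `λ`, `n ^ (2/3) ≤ n` gives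
`E[Z^(2/3)] ≤ λ`, and the term `n = 1` alone gives `λ e^(-λ)`.
-/

open Real

noncomputable def poissonWeight (lam : ℝ) (n : ℕ) : ℝ := exp (-lam) * lam ^ n / n.factorial

namespace poissonWeight

variable {lam : ℝ}

lemma nonneg (hlam : 0 ≤ lam) (n : ℕ) : 0 ≤ poissonWeight lam n := by
  unfold poissonWeight; positivity

variable (lam)

lemma succ_mul (n : ℕ) : poissonWeight lam (n + 1) * (n + 1) = lam * poissonWeight lam n := by
  simp only [poissonWeight, Nat.factorial_succ, Nat.cast_mul, Nat.cast_succ, pow_succ]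
  field_simp

theorem hasSum : HasSum (poissonWeight lam) 1 := by
  have h := (NormedSpace.expSeries_div_hasSum_exp lam).mul_left (exp (-lam))
  rw [← exp_eq_exp_ℝ, ← exp_add, neg_add_cancel, exp_zero] at h
  convert! h using 2 with n
  exact mul_div_assoc ..

/-- The Stein–Chen identity `E[Z f(Z)] = λ E[f(Z + 1)]`. -/
theorem hasSum_mul_cast_mul {f : ℕ → ℝ} {a : ℝ}
    (h : HasSum (fun n ↦ poissonWeight lam n * f (n + 1)) a) :
    HasSum (fun n ↦ poissonWeight lam n * (n * f n)) (lam * a) := by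
  rw [← hasSum_nat_add_iff' 1]
  simp only [Finset.sum_range_one, Nat.cast_zero, zero_mul, mul_zero, sub_zero]
  have hshift : (fun n : ℕ ↦ poissonWeight lam (n + 1) * ((n + 1 : ℕ) * f (n + 1)))
      = fun n ↦ lam * (poissonWeight lam n * f (n + 1)) := by
    funext n
    rw [Nat.cast_succ, ← mul_assoc, succ_mul, mul_assoc]
  exact hshift ▸ h.mul_left lam

theorem hasSum_mul_cast : HasSum (fun n ↦ poissonWeight lam n * n) lam := by
  have h := hasSum_mul_cast_mul lam (f := fun _ ↦ 1) (by simpa using hasSum lam)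
  simpa using h

theorem hasSum_mul_cast_sq : HasSum (fun n ↦ poissonWeight lam n * n ^ 2) (lam ^ 2 + lam) := by
  have h : HasSum (fun n ↦ poissonWeight lam n * ((n + 1 : ℕ) : ℝ)) (lam + 1) := by
    simpa [mul_add] using (hasSum_mul_cast lam).add (hasSum lam)
  convert hasSum_mul_cast_mul lam h using 1
  · simp [sq]
  · ring

end poissonWeight

lemma Nat.cast_rpow_le_self {p : ℝ} (hp₀ : 0 < p) (hp₁ : p ≤ 1) (n : ℕ) :
    (n : ℝ) ^ p ≤ n := by
  rcases n.eq_zero_or_pos with rfl | hn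
  · simp [zero_rpow hp₀.ne']
  · exact rpow_le_self_of_one_le (by exact_mod_cast hn) hp₁

lemma exists_eq_pow_three_and_rpow_two_thirds_eq_sq {x : ℝ} (hx : 0 ≤ x) :
    ∃ y, 0 ≤ y ∧ x = y ^ 3 ∧ x ^ (2 / 3 : ℝ) = y ^ 2 := by
  refine ⟨x ^ (3⁻¹ : ℝ), by positivity, (rpow_inv_natCast_pow hx three_ne_zero).symm, ?_⟩
  rw [← rpow_natCast, ← rpow_mul hx]
  norm_num

lemma mul_rpow_two_thirds_le {x s : ℝ} (hx : 0 ≤ x) (hs : 0 ≤ s) :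
    3 * s * x ^ (2 / 3 : ℝ) ≤ 2 * x + s ^ 3 := by
  obtain ⟨y, hy, rfl, h⟩ := exists_eq_pow_three_and_rpow_two_thirds_eq_sq hx
  rw [h]
  nlinarith [mul_nonneg (sq_nonneg (y - s)) (by positivity : 0 ≤ 2 * y + s)]

lemma mul_le_mul_rpow_two_thirds_add_sq {x s : ℝ} (hx : 0 ≤ x) :
    4 * s ^ 3 * x ≤ 3 * s ^ 4 * x ^ (2 / 3 : ℝ) + x ^ 2 := by
  obtain ⟨y, hy, rfl, h⟩ := exists_eq_pow_three_and_rpow_two_thirds_eq_sq hx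
  rw [h]
  nlinarith [mul_nonneg (mul_nonneg (sq_nonneg y) (sq_nonneg (y - s)))
    (by nlinarith [sq_nonneg (y + s)] : 0 ≤ y ^ 2 + 2 * s * y + 3 * s ^ 2)]

noncomputable def poissonTwoThirdsMoment (lam : ℝ) : ℝ :=
  ∑' n : ℕ, poissonWeight lam n * (n : ℝ) ^ (2 / 3 : ℝ)

section poissonTwoThirdsMoment

variable {lam : ℝ}

lemma hasSum_poissonTwoThirdsMoment (hlam : 0 ≤ lam) :
    HasSum (fun n : ℕ ↦ poissonWeight lam n * (n : ℝ) ^ (2 / 3 : ℝ))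
      (poissonTwoThirdsMoment lam) :=
  ((poissonWeight.hasSum_mul_cast lam).summable.of_nonneg_of_le
    (fun n ↦ mul_nonneg (poissonWeight.nonneg hlam n) (by positivity))
    (fun n ↦ mul_le_mul_of_nonneg_left (Nat.cast_rpow_le_self (by norm_num) (by norm_num) n)
      (poissonWeight.nonneg hlam n))).hasSum

lemma poissonTwoThirdsMoment_le_self (hlam : 0 ≤ lam) : poissonTwoThirdsMoment lam ≤ lam :=
  hasSum_le (fun n ↦ mul_le_mul_of_nonneg_left
      (Nat.cast_rpow_le_self (by norm_num) (by norm_num) n) (poissonWeight.nonneg hlam n))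
    (hasSum_poissonTwoThirdsMoment hlam) (poissonWeight.hasSum_mul_cast lam)

lemma mul_exp_neg_le_poissonTwoThirdsMoment (hlam : 0 ≤ lam) :
    lam * exp (-lam) ≤ poissonTwoThirdsMoment lam := by
  have h := (hasSum_poissonTwoThirdsMoment hlam).summable.le_tsum 1
    (fun n _ ↦ mul_nonneg (poissonWeight.nonneg hlam n) (by positivity))
  refine le_trans (le_of_eq ?_) h
  simp [poissonWeight, mul_comm]

lemma poissonTwoThirdsMoment_le_rpow (hlam : 0 < lam) :
    poissonTwoThirdsMoment lam ≤ lam ^ (2 / 3 : ℝ) := by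
  obtain ⟨s, hs, rfl, hlam_rpow⟩ := exists_eq_pow_three_and_rpow_two_thirds_eq_sq hlam.le
  have hs_pos : 0 < s := hs.lt_of_ne (by rintro rfl; simp at hlam)
  have h : 3 * s * poissonTwoThirdsMoment (s ^ 3) ≤ 2 * s ^ 3 + s ^ 3 * 1 :=
    hasSum_le (fun n ↦ by
        linear_combination mul_le_mul_of_nonneg_left (mul_rpow_two_thirds_le n.cast_nonneg hs)
          (poissonWeight.nonneg hlam.le n))
      ((hasSum_poissonTwoThirdsMoment hlam.le).mul_left (3 * s))
      (((poissonWeight.hasSum_mul_cast _).mul_left 2).add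
        ((poissonWeight.hasSum _).mul_left (s ^ 3)))
  rw [hlam_rpow]
  nlinarith

lemma two_thirds_mul_rpow_le_poissonTwoThirdsMoment (hlam : 1 ≤ lam) :
    2 / 3 * lam ^ (2 / 3 : ℝ) ≤ poissonTwoThirdsMoment lam := by
  obtain ⟨s, hs, rfl, hlam_rpow⟩ :=
    exists_eq_pow_three_and_rpow_two_thirds_eq_sq (zero_le_one.trans hlam)
  have hs_one : 1 ≤ s := le_of_pow_le_pow_left₀ three_ne_zero hs (by simpa using hlam)
  have h : 4 * s ^ 3 * s ^ 3
      ≤ 3 * s ^ 4 * poissonTwoThirdsMoment (s ^ 3) + ((s ^ 3) ^ 2 + s ^ 3) :=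
    hasSum_le (fun n ↦ by
        linear_combination mul_le_mul_of_nonneg_left
          (mul_le_mul_rpow_two_thirds_add_sq n.cast_nonneg (s := s))
          (poissonWeight.nonneg (lam := s ^ 3) (by positivity) n))
      ((poissonWeight.hasSum_mul_cast _).mul_left (4 * s ^ 3))
      (((hasSum_poissonTwoThirdsMoment (by positivity)).mul_left (3 * s ^ 4)).add
        (poissonWeight.hasSum_mul_cast_sq _))
  rw [hlam_rpow]
  have hs3 : s ^ 3 ≤ s ^ 6 := pow_le_pow_right₀ hs_one (by norm_num)
  refine le_of_mul_le_mul_left ?_ (by positivity : (0 : ℝ) < 3 * s ^ 4)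
  linear_combination h + hs3

end poissonTwoThirdsMoment

/-- Bounds on `E[Z^(2/3)]` for `Z ~ Poisson(λ)`:
if `λ ≥ 1` then `e^(-2/3) λ^(2/3) / 2 ≤ E[Z^(2/3)] ≤ λ^(2/3)`;
if `λ ≤ 1` then `λ e^(-λ) ≤ E[Z^(2/3)] ≤ λ`. -/
theorem poisson_twothirds_moment_bounds (lam : ℝ) (hlam : 0 ≤ lam) :
    (1 ≤ lam →
      Real.exp (-(2 / 3)) * lam ^ ((2 : ℝ) / 3) / 2
          ≤ (∑' n : ℕ, (Real.exp (-lam) * lam ^ n / n.factorial) * (n : ℝ) ^ ((2 : ℝ) / 3)) ∧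
        (∑' n : ℕ, (Real.exp (-lam) * lam ^ n / n.factorial) * (n : ℝ) ^ ((2 : ℝ) / 3))
          ≤ lam ^ ((2 : ℝ) / 3)) ∧
    (lam ≤ 1 →
      lam * Real.exp (-lam)
          ≤ (∑' n : ℕ, (Real.exp (-lam) * lam ^ n / n.factorial) * (n : ℝ) ^ ((2 : ℝ) / 3)) ∧
        (∑' n : ℕ, (Real.exp (-lam) * lam ^ n / n.factorial) * (n : ℝ) ^ ((2 : ℝ) / 3))
          ≤ lam) := by
  refine ⟨fun h1 ↦ ⟨?_, poissonTwoThirdsMoment_le_rpow (zero_lt_one.trans_le h1)⟩,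
    fun _ ↦ ⟨mul_exp_neg_le_poissonTwoThirdsMoment hlam, poissonTwoThirdsMoment_le_self hlam⟩⟩
  refine le_trans ?_ (two_thirds_mul_rpow_le_poissonTwoThirdsMoment h1)
  have hexp : exp (-(2 / 3)) ≤ 1 := exp_le_one_iff.mpr (by norm_num)
  have hrpow : 0 ≤ lam ^ (2 / 3 : ℝ) := by positivity
  nlinarith
end

section
/- Let Z ~ Poisson(λ). If λ ≥ e^{−2}, then E[Z^{4/3}] ≤ λ^{4/3}·e^{8/3} + e^{−λ}/(1 − e^{−1/2}); and if λ < e^{−2}, then E[Z^{4/3}] ≤ e^{−λ}·λ·(2^{1/3} + e). -/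
/-!
Split the series at `n = e² λ`. Below it, `n^(4/3) ≤ (e² λ)^(4/3)` and the Poisson
weights sum to one. Above it, `λ^n / n! ≤ (n / e²)^n / n! ≤ e^(-n)`, while `n^(4/3) ≤ e^(n/2)`
(from `log x ≤ x / e`), so the tail is dominated by `e^(-λ)` times a geometric series of ratio
`e^(-1/2)`. For small `λ`, instead use `n^(4/3) ≤ n · 2^((n-1)/3)`: after cancelling `n` against `n!`
the series becomes `e^(-λ) λ e^(2^(1/3) λ)`, and `2^(1/3) λ ≤ 1`.
-/

open Real Nat

lemma Real.hasSum_pow_div_factorial (x : ℝ) : HasSum (fun n ↦ x ^ n / n !) (exp x) := by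
  rw [exp_eq_exp_ℝ]
  exact NormedSpace.expSeries_div_hasSum_exp x

lemma tsum_le_of_nonneg_of_le_of_hasSum {ι : Type*} {f g : ι → ℝ} {a : ℝ} (hf : ∀ i, 0 ≤ f i)
    (hfg : ∀ i, f i ≤ g i) (hg : HasSum g a) : ∑' i, f i ≤ a :=
  hasSum_le hfg (Summable.of_nonneg_of_le hf hfg hg.summable).hasSum hg

lemma Real.log_le_div_exp_one {x : ℝ} (hx : 0 < x) : log x ≤ x / exp 1 := by
  have h := add_one_le_exp (log x - 1)
  rw [exp_sub, exp_log hx] at h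
  linarith

lemma Real.rpow_le_exp_mul_div_exp_one {x p : ℝ} (hx : 0 ≤ x) (hp : 0 ≤ p) :
    x ^ p ≤ exp (p * x / exp 1) := by
  rcases hx.eq_or_lt with rfl | hx
  · simpa using zero_rpow_le_one p
  · rw [rpow_def_of_pos hx, exp_le_exp, mul_comm, mul_div_assoc]
    exact mul_le_mul_of_nonneg_left (log_le_div_exp_one hx) hp

lemma Real.rpow_four_thirds_le_exp_half {x : ℝ} (hx : 0 ≤ x) : x ^ (4 / 3 : ℝ) ≤ exp (x / 2) := by
  refine (rpow_le_exp_mul_div_exp_one hx (by norm_num)).trans (exp_le_exp.2 ?_)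
  have he := exp_one_gt_d9
  rw [div_le_div_iff₀ (by positivity) two_pos]
  nlinarith

lemma pow_div_factorial_le_exp_div_pow {x t : ℝ} {n : ℕ} (hx : 0 ≤ x) (ht : 0 < t)
    (h : t * x ≤ n) : x ^ n / n ! ≤ exp n / t ^ n := calc
  x ^ n / n ! ≤ (n / t) ^ n / n ! := by gcongr; rwa [le_div_iff₀' ht]
  _ = (n : ℝ) ^ n / n ! / t ^ n := by rw [div_pow]; ring
  _ ≤ exp n / t ^ n := by gcongr; exact pow_div_factorial_le_exp _ n.cast_nonneg n

lemma add_one_rpow_le_two_rpow_pow (m : ℕ) {p : ℝ} (hp : 0 ≤ p) :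
    ((m : ℝ) + 1) ^ p ≤ ((2 : ℝ) ^ p) ^ m := by
  rw [← rpow_natCast, ← rpow_mul two_pos.le, mul_comm, rpow_mul two_pos.le, rpow_natCast]
  gcongr
  exact_mod_cast m.lt_two_pow_self

section Poisson

variable {lam : ℝ}

lemma poisson_mul_rpow_four_thirds_le (hlam : 0 ≤ lam) (n : ℕ) :
    exp (-lam) * lam ^ n / n ! * (n : ℝ) ^ (4 / 3 : ℝ)
      ≤ exp (-lam) * (lam ^ n / n !) * (lam ^ (4 / 3 : ℝ) * exp (8 / 3))
        + exp (-lam) * exp (-(1 / 2)) ^ n := by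
  rw [mul_div_assoc]
  rcases le_or_gt (n : ℝ) (exp 2 * lam) with hle | hgt
  · have hbulk : (n : ℝ) ^ (4 / 3 : ℝ) ≤ lam ^ (4 / 3 : ℝ) * exp (8 / 3) := calc
      (n : ℝ) ^ (4 / 3 : ℝ) ≤ (exp 2 * lam) ^ (4 / 3 : ℝ) := by gcongr
      _ = lam ^ (4 / 3 : ℝ) * exp (8 / 3) := by
        rw [mul_rpow (exp_pos 2).le hlam, ← exp_mul, mul_comm]; norm_num
    have hweighted := mul_le_mul_of_nonneg_left hbulk
      (by positivity : 0 ≤ exp (-lam) * (lam ^ n / n !))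
    have htail : 0 ≤ exp (-lam) * exp (-(1 / 2)) ^ n := by positivity
    linarith
  · have hrate : exp n / exp 2 ^ n * exp (n / 2) = exp (-(1 / 2)) ^ n := by
      rw [← exp_nat_mul, ← exp_nat_mul, ← exp_sub, ← exp_add]; ring_nf
    calc exp (-lam) * (lam ^ n / n !) * (n : ℝ) ^ (4 / 3 : ℝ)
        ≤ exp (-lam) * (exp n / exp 2 ^ n) * exp (n / 2) := by
          gcongr exp (-lam) * ?_ * ?_
          · exact pow_div_factorial_le_exp_div_pow hlam (exp_pos 2) hgt.le
          · exact rpow_four_thirds_le_exp_half n.cast_nonneg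
      _ = exp (-lam) * exp (-(1 / 2)) ^ n := by rw [mul_assoc, hrate]
      _ ≤ _ := le_add_of_nonneg_left (by positivity)

lemma tsum_poisson_mul_rpow_four_thirds_le (hlam : 0 ≤ lam) :
    ∑' n : ℕ, exp (-lam) * lam ^ n / n ! * (n : ℝ) ^ (4 / 3 : ℝ)
      ≤ lam ^ (4 / 3 : ℝ) * exp (8 / 3) + exp (-lam) / (1 - exp (-(1 / 2))) := by
  have hr : exp (-(1 / 2)) < 1 := exp_lt_one_iff.2 (by norm_num)
  have hsum := (((hasSum_pow_div_factorial lam).mul_left (exp (-lam))).mul_right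
    (lam ^ (4 / 3 : ℝ) * exp (8 / 3))).add
    ((hasSum_geometric_of_lt_one (exp_pos _).le hr).mul_left (exp (-lam)))
  refine (tsum_le_of_nonneg_of_le_of_hasSum (fun n ↦ by positivity)
    (poisson_mul_rpow_four_thirds_le hlam) hsum).trans_eq ?_
  rw [← exp_add, neg_add_cancel, exp_zero, one_mul, ← div_eq_mul_inv]

lemma poisson_succ_mul_rpow_four_thirds_le (hlam : 0 ≤ lam) (m : ℕ) :
    exp (-lam) * lam ^ (m + 1) / (m + 1)! * ((m + 1 : ℕ) : ℝ) ^ (4 / 3 : ℝ)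
      ≤ exp (-lam) * lam * ((2 ^ (1 / 3 : ℝ) * lam) ^ m / m !) := by
  have hsplit : ((m : ℝ) + 1) ^ (4 / 3 : ℝ) = ((m : ℝ) + 1) * ((m : ℝ) + 1) ^ (1 / 3 : ℝ) := by
    rw [show (4 / 3 : ℝ) = 1 + 1 / 3 by norm_num, rpow_add (by positivity), rpow_one]
  calc exp (-lam) * lam ^ (m + 1) / (m + 1)! * ((m + 1 : ℕ) : ℝ) ^ (4 / 3 : ℝ)
      = exp (-lam) * lam * (lam ^ m / m !) * ((m : ℝ) + 1) ^ (1 / 3 : ℝ) := by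
        rw [cast_add_one, hsplit, factorial_succ, cast_mul, cast_add_one]
        field_simp
        ring
    _ ≤ exp (-lam) * lam * (lam ^ m / m !) * ((2 : ℝ) ^ (1 / 3 : ℝ)) ^ m := by
        gcongr
        exact add_one_rpow_le_two_rpow_pow m (by norm_num)
    _ = exp (-lam) * lam * ((2 ^ (1 / 3 : ℝ) * lam) ^ m / m !) := by rw [mul_pow]; ring

lemma tsum_poisson_mul_rpow_four_thirds_le_of_lt (hlam : 0 ≤ lam) (hsmall : lam < exp (-2)) :
    ∑' n : ℕ, exp (-lam) * lam ^ n / n ! * (n : ℝ) ^ (4 / 3 : ℝ)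
      ≤ exp (-lam) * lam * (2 ^ (1 / 3 : ℝ) + exp 1) := by
  set c : ℝ := 2 ^ (1 / 3 : ℝ)
  have hc : c ≤ 2 :=
    (rpow_le_rpow_of_exponent_le one_le_two (by norm_num : (1 / 3 : ℝ) ≤ 1)).trans_eq (rpow_one 2)
  have hexp_neg_two : exp (-2) ≤ 1 / 2 := by
    rw [exp_neg, inv_le_comm₀ (exp_pos 2) (by norm_num)]
    linarith [add_one_le_exp 2]
  have hclam : c * lam ≤ 1 := by nlinarith [rpow_pos_of_pos two_pos (1 / 3 : ℝ)]
  have hsum := (hasSum_pow_div_factorial (c * lam)).mul_left (exp (-lam) * lam)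
  have hshift : ∑' n : ℕ, exp (-lam) * lam ^ n / n ! * (n : ℝ) ^ (4 / 3 : ℝ)
      = ∑' m : ℕ, exp (-lam) * lam ^ (m + 1) / (m + 1)! * ((m + 1 : ℕ) : ℝ) ^ (4 / 3 : ℝ) := by
    rw [tsum_eq_zero_add' (Summable.of_nonneg_of_le (fun m ↦ by positivity)
      (poisson_succ_mul_rpow_four_thirds_le hlam) hsum.summable)]
    simp
  rw [hshift]
  calc _ ≤ exp (-lam) * lam * exp (c * lam) := tsum_le_of_nonneg_of_le_of_hasSum
        (fun m ↦ by positivity) (poisson_succ_mul_rpow_four_thirds_le hlam) hsum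
    _ ≤ exp (-lam) * lam * (c + exp 1) := by
        gcongr
        calc exp (c * lam) ≤ exp 1 := exp_le_exp.2 hclam
          _ ≤ c + exp 1 := le_add_of_nonneg_left (by positivity)

end Poisson

/-- Bounds on `E[Z^(4/3)]` for `Z ~ Poisson(λ)`:
if `λ ≥ e⁻²` then `E[Z^(4/3)] ≤ λ^(4/3) e^(8/3) + e^(-λ)/(1 - e^(-1/2))`;
if `λ < e⁻²` then `E[Z^(4/3)] ≤ e^(-λ) λ (2^(1/3) + e)`. -/
theorem poisson_fourthirds_moment_bounds (lam : ℝ) (hlam : 0 ≤ lam) :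
    (Real.exp (-2) ≤ lam →
      (∑' n : ℕ, (Real.exp (-lam) * lam ^ n / n.factorial) * (n : ℝ) ^ ((4 : ℝ) / 3))
        ≤ lam ^ ((4 : ℝ) / 3) * Real.exp (8 / 3)
            + Real.exp (-lam) / (1 - Real.exp (-(1 / 2)))) ∧
    (lam < Real.exp (-2) →
      (∑' n : ℕ, (Real.exp (-lam) * lam ^ n / n.factorial) * (n : ℝ) ^ ((4 : ℝ) / 3))
        ≤ Real.exp (-lam) * lam * ((2 : ℝ) ^ ((1 : ℝ) / 3) + Real.exp 1)) :=
  ⟨fun _ ↦ tsum_poisson_mul_rpow_four_thirds_le hlam,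
    tsum_poisson_mul_rpow_four_thirds_le_of_lt hlam⟩
end

section
/- If C_π = sqrt(Σ_i π_i² exp(−2(1+v)kπ_i))/k and I = I_{v,π} as defined via the three constraints (π_I ≤ sqrt(C_π/I), tail second-moment constraint Σ_{i≥I} exp(−2kπ_i)π_i² ≤ u·C_π contribution, and tail mass constraint), and if π_i² exp(−2kπ_i) ≤ 1/k² for all i, then C_π ≤ max( sqrt(2I)/k², 2u/k² ), and hence sqrt(C_π)/I^{1/4} ≤ √2 / k for 0 < u < 1. -/
open Real Finset

/-!
Split `k² C_π² = Σ_i π_i² e^{-2(1+v)kπ_i}` at `I`. Each of the first `I` terms is at most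
`π_i² e^{-2kπ_i} ≤ 1/k²` and the tail is at most `u C_π`, so `x = k² C_π` satisfies
`x² ≤ I + u x`. Either `x ≤ 2u`, or `u x < x²/2` and then `x² < 2I`.
Since `u < 1 ≤ I`, both alternatives give `C_π ≤ 2√I / k²`, and taking square roots
gives the second claim.
-/

lemma le_max_sqrt_of_sq_le_add_mul {x a b : ℝ} (hx : 0 ≤ x) (h : x ^ 2 ≤ a + b * x) :
    x ≤ max √(2 * a) (2 * b) := by
  rcases le_or_gt x (2 * b) with hxb | hbx
  · exact le_max_of_le_right hxb
  · refine le_max_of_le_left ((le_abs_self x).trans (abs_le_sqrt ?_))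
    nlinarith

lemma max_sqrt_two_mul_le_two_mul_sqrt {a b : ℝ} (ha : 1 ≤ a) (hb : b ≤ 1) :
    max √(2 * a) (2 * b) ≤ 2 * √a := by
  have hsqrt_a : 1 ≤ √a := one_le_sqrt.mpr ha
  have hsqrt_two : √2 ≤ 2 := sqrt_le_iff.mpr ⟨by norm_num, by norm_num⟩
  refine max_le ?_ (by linarith)
  rw [sqrt_mul zero_le_two]
  gcongr

lemma sqrt_div_rpow_le_of_le_two_mul_sqrt {C a k : ℝ} (ha : 0 < a) (hk : 0 < k)
    (hC : C ≤ 2 * √a / k ^ 2) : √C / a ^ (1 / 4 : ℝ) ≤ √2 / k := by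
  have hfourth : √√a = a ^ (1 / 4 : ℝ) := by
    rw [sqrt_eq_rpow, sqrt_eq_rpow, ← rpow_mul ha.le]
    norm_num
  have hsqrt : √(2 * √a / k ^ 2) = √2 * a ^ (1 / 4 : ℝ) / k := by
    rw [sqrt_div' _ (by positivity), sqrt_sq hk.le, sqrt_mul zero_le_two, hfourth]
  rw [div_le_iff₀ (by positivity), div_mul_eq_mul_div, ← hsqrt]
  exact sqrt_le_sqrt hC

lemma sum_range_sq_mul_exp_le {p : ℕ → ℝ} {k v : ℝ} (n : ℕ) (hp : ∀ i, 0 ≤ p i) (hk : 0 ≤ k)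
    (hv : 0 ≤ v) (hpt : ∀ i, p i ^ 2 * exp (-2 * k * p i) ≤ 1 / k ^ 2) :
    ∑ i ∈ range n, p i ^ 2 * exp (-2 * (1 + v) * k * p i) ≤ n / k ^ 2 := by
  have hterm (i : ℕ) : p i ^ 2 * exp (-2 * (1 + v) * k * p i) ≤ 1 / k ^ 2 := by
    refine le_trans ?_ (hpt i)
    gcongr _ * exp ?_
    nlinarith [mul_nonneg (mul_nonneg hv hk) (hp i)]
  calc ∑ i ∈ range n, p i ^ 2 * exp (-2 * (1 + v) * k * p i)
      ≤ #(range n) • (1 / k ^ 2) := sum_le_card_nsmul _ _ _ fun i _ => hterm i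
    _ = n / k ^ 2 := by rw [card_range, nsmul_eq_mul, mul_one_div]

theorem Cpi_bound_of_tail_constraint_general
    (d k : ℕ) (hk : 0 < k)
    (pp : ℕ → ℝ) (hpp0 : ∀ i, 0 ≤ pp i)
    (u v : ℝ) (hu1 : u < 1) (hv : 0 ≤ v)
    (C : ℝ)
    (hC : C = Real.sqrt (∑ i ∈ range d,
        pp i ^ 2 * Real.exp (-2 * (1 + v) * k * pp i)) / k)
    (I : ℕ) (hI1 : 1 ≤ I) (hId : I ≤ d)
    (hpt : ∀ i, pp i ^ 2 * Real.exp (-2 * k * pp i) ≤ 1 / (k : ℝ) ^ 2)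
    (htail : ∑ i ∈ Finset.Ico I d,
        Real.exp (-2 * (1 + v) * k * pp i) * pp i ^ 2 ≤ u * C) :
    C ≤ max (Real.sqrt (2 * I) / (k : ℝ) ^ 2) (2 * u / (k : ℝ) ^ 2) ∧
      Real.sqrt C / (I : ℝ) ^ ((1 : ℝ) / 4) ≤ Real.sqrt 2 / k := by
  have hk' : (0 : ℝ) < k := by exact_mod_cast hk
  have hC0 : 0 ≤ C := hC ▸ by positivity
  have hsum : (C * k) ^ 2 = ∑ i ∈ range d, pp i ^ 2 * exp (-2 * (1 + v) * k * pp i) := by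
    rw [hC, div_mul_cancel₀ _ hk'.ne', sq_sqrt (sum_nonneg fun i _ => by positivity)]
  have hsplit := sum_range_add_sum_Ico (fun i => pp i ^ 2 * exp (-2 * (1 + v) * k * pp i)) hId
  have hhead := sum_range_sq_mul_exp_le I hpp0 hk'.le hv hpt
  simp_rw [mul_comm (exp _)] at htail
  have hquad : (C * k ^ 2) ^ 2 ≤ I + u * (C * k ^ 2) :=
    calc (C * k ^ 2) ^ 2 = k ^ 2 * (C * k) ^ 2 := by ring
      _ ≤ k ^ 2 * (I / k ^ 2 + u * C) := by gcongr; linarith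
      _ = I + u * (C * k ^ 2) := by field_simp
  have hfirst : C ≤ max (√(2 * I) / (k : ℝ) ^ 2) (2 * u / (k : ℝ) ^ 2) := by
    rw [max_div_div_right (by positivity), le_div_iff₀ (by positivity)]
    exact le_max_sqrt_of_sq_le_add_mul (by positivity) hquad
  refine ⟨hfirst, sqrt_div_rpow_le_of_le_two_mul_sqrt (Nat.cast_pos.mpr hI1) hk' (hfirst.trans ?_)⟩
  rw [max_div_div_right (by positivity)]
  gcongr
  exact max_sqrt_two_mul_le_two_mul_sqrt (by exact_mod_cast hI1) hu1.le

/-- Step 1 of the lemma "lower": with `C_π = sqrt(Σ π_i² exp(-2(1+v)kπ_i))/k`, if every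
term satisfies `π_i² exp(-2kπ_i) ≤ 1/k²` and the tail beyond `I` satisfies
`Σ_{i ≥ I} exp(-2(1+v)kπ_i) π_i² ≤ u C_π`, then
`C_π ≤ max(√(2I)/k², 2u/k²)`, hence `√C_π / I^{1/4} ≤ √2 / k`. -/
theorem Cpi_bound_of_tail_constraint
    (d k : ℕ) (hk : 0 < k)
    (pp : ℕ → ℝ) (hpp0 : ∀ i, 0 ≤ pp i) (hppsum : ∑ i ∈ range d, pp i ≤ 1)
    (hanti : Antitone pp)
    (u v : ℝ) (hu0 : 0 < u) (hu1 : u < 1) (hv : 0 ≤ v)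
    (C : ℝ)
    (hC : C = Real.sqrt (∑ i ∈ range d,
        pp i ^ 2 * Real.exp (-2 * (1 + v) * k * pp i)) / k)
    (I : ℕ) (hI1 : 1 ≤ I) (hId : I ≤ d)
    (hpt : ∀ i, pp i ^ 2 * Real.exp (-2 * k * pp i) ≤ 1 / (k : ℝ) ^ 2)
    (htail : ∑ i ∈ Finset.Ico I d,
        Real.exp (-2 * (1 + v) * k * pp i) * pp i ^ 2 ≤ u * C) :
    C ≤ max (Real.sqrt (2 * I) / (k : ℝ) ^ 2) (2 * u / (k : ℝ) ^ 2) ∧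
      Real.sqrt C / (I : ℝ) ^ ((1 : ℝ) / 4) ≤ Real.sqrt 2 / k :=
  Cpi_bound_of_tail_constraint_general d k hk pp hpp0 u v hu1 hv C hC I hI1 hId hpt htail
end
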